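/- arXiv:2507.14414 — 3 statements merged into one kernel-verified Lean document; each statement's English description precedes it below -/
import Mathlib

section
/- (Cauchy–Schwarz step: L⁴ of the average is bounded by L² of the dual function.) With notation as follows, if f_l is 1-bounded then (𝔼_{x ∈ 𝔽_p^D} |G(x)|²)² ≤ 𝔼_{x ∈ 𝔽_p^D} |F(x)|², where G(x) := 𝔼_{y ∈ 𝔽_p} θ(y) ∏_{i=1}^l f_i(x + P_i(y) v_i) ∏_{i=l+1}^k e_p(P_i(y) ξ_i) and F is the dual function F(x) := 𝔼_{y,y' ∈ 𝔽_p} θ(y) conj(θ(y')) [∏_{i=1}^{l−1} f_i(x + P_i(y)v_i − P_l(y')v_l) conj(f_i)(x + P_i(y')v_i − P_l(y')v_l)] f_l(x + P_l(y)v_l − P_l(y')v_l) ∏_{i=l+1}^k e_p((P_i(y) − P_i(y'))ξ_i). -/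
open Finset

/-- The additive character `e_p(x) = exp(2πi x / p)` on `𝔽_p`. -/
noncomputable def ep (p : ℕ) (x : ZMod p) : ℂ :=
  Complex.exp (2 * Real.pi * Complex.I * (x.val : ℂ) / p)

/-- The weighted multilinear averaging operator
`G_{l,k}^θ(x) = 𝔼_y θ(y) ∏_{i=1}^l f_i(x + P_i(y) v_i) ∏_{i=l+1}^k e_p(P_i(y) ξ_i)`. -/
noncomputable def Gop (p D k l : ℕ) [NeZero p] (θ : ZMod p → ℂ)
    (f : Fin k → (Fin D → ZMod p) → ℂ) (v : Fin k → Fin D → ZMod p)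
    (P : Fin k → ZMod p → ZMod p) (ξ : Fin k → ZMod p) (x : Fin D → ZMod p) : ℂ :=
  (∑ y : ZMod p, θ y
      * (∏ i ∈ Finset.univ.filter (fun i : Fin k => i.val < l), f i (x + P i y • v i))
      * ∏ i ∈ Finset.univ.filter (fun i : Fin k => l ≤ i.val), ep p (P i y * ξ i)) / p

/-- The dual function `F_{l,k}^θ` associated to the weighted averaging operator. -/
noncomputable def Fdual (p D k l : ℕ) [NeZero p] (hl : 1 ≤ l) (hlk : l ≤ k)
    (θ : ZMod p → ℂ) (f : Fin k → (Fin D → ZMod p) → ℂ) (v : Fin k → Fin D → ZMod p)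
    (P : Fin k → ZMod p → ZMod p) (ξ : Fin k → ZMod p) (x : Fin D → ZMod p) : ℂ :=
  let li : Fin k := ⟨l - 1, by omega⟩
  (∑ y : ZMod p, ∑ y' : ZMod p, θ y * star (θ y')
      * (∏ i ∈ Finset.univ.filter (fun i : Fin k => i.val + 1 < l),
          f i (x + P i y • v i - P li y' • v li)
            * star (f i (x + P i y' • v i - P li y' • v li)))
      * f li (x + P li y • v li - P li y' • v li)
      * ∏ i ∈ Finset.univ.filter (fun i : Fin k => l ≤ i.val),
          ep p ((P i y - P i y') * ξ i)) / ((p : ℂ) * p)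

/-! Expanding `|G(x)|²` as a double sum over `y, y'` and translating `x` by `P_l(y') v_l` in each
term turns `𝔼_x |G|²` into `𝔼_x F · conj f_l`; the exponential phases combine because `e_p` is an
additive character. As `f_l` is 1-bounded, Cauchy–Schwarz then gives
`(𝔼 |G|²)² ≤ (𝔼 |F|)² ≤ 𝔼 |F|²`. -/

theorem ep_eq_stdAddChar (p : ℕ) [NeZero p] (x : ZMod p) : ep p x = ZMod.stdAddChar x := by
  rw [ZMod.stdAddChar_apply, ZMod.toCircle_apply, ep]

theorem ep_sub (p : ℕ) [NeZero p] (a b : ZMod p) : ep p (a - b) = ep p a * star (ep p b) := by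
  simp only [ep_eq_stdAddChar, sub_eq_add_neg, AddChar.map_add_eq_mul, AddChar.map_neg_eq_conj,
    Complex.star_def]

theorem sq_sum_norm_sq_div_card_le_of_sum_mul_star_eq {α 𝕜 : Type*} [Fintype α] [RCLike 𝕜]
    {G F g : α → 𝕜}
    (hg : ∀ x, ‖g x‖ ≤ 1) (h : ∑ x, G x * star (G x) = ∑ x, F x * star (g x)) :
    ((∑ x, ‖G x‖ ^ 2) / Fintype.card α) ^ 2 ≤ (∑ x, ‖F x‖ ^ 2) / Fintype.card α := by
  set N : ℝ := (Fintype.card α : ℝ)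
  have hS : ∑ x, ‖G x‖ ^ 2 = ‖∑ x, F x * star (g x)‖ := by
    rw [← h]
    simp only [RCLike.star_def, RCLike.mul_conj, ← RCLike.ofReal_pow, ← RCLike.ofReal_sum,
      RCLike.norm_ofReal]
    exact (abs_of_nonneg (by positivity)).symm
  have hCS : (∑ x, ‖G x‖ ^ 2) ^ 2 ≤ N * ∑ x, ‖F x‖ ^ 2 := by
    calc (∑ x, ‖G x‖ ^ 2) ^ 2 ≤ (∑ x, ‖F x‖) ^ 2 := by
          rw [hS]
          gcongr
          refine (norm_sum_le _ _).trans (sum_le_sum fun x _ => ?_)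
          rw [norm_mul, norm_star]
          exact mul_le_of_le_one_right (norm_nonneg _) (hg x)
      _ ≤ N * ∑ x, ‖F x‖ ^ 2 := sq_sum_le_card_mul_sum_sq
  rcases (show (0 : ℝ) ≤ N by positivity).eq_or_lt with hN | hN
  · rw [← hN, div_zero, div_zero]
    simp
  · rw [div_pow, div_le_div_iff₀ (by positivity) hN]
    nlinarith

section DualIdentity

variable {p D k : ℕ} (l : ℕ) (hl : 1 ≤ l) (hlk : l ≤ k) (θ : ZMod p → ℂ)
  (f : Fin k → (Fin D → ZMod p) → ℂ) (v : Fin k → Fin D → ZMod p) (P : Fin k → ZMod p → ZMod p)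
  (ξ : Fin k → ZMod p)

noncomputable def Gop.summand (y : ZMod p) (x : Fin D → ZMod p) : ℂ :=
  θ y * (∏ i ∈ univ.filter (fun i : Fin k => i.val < l), f i (x + P i y • v i))
    * ∏ i ∈ univ.filter (fun i : Fin k => l ≤ i.val), ep p (P i y * ξ i)

noncomputable def Fdual.summand (y y' : ZMod p) (x : Fin D → ZMod p) : ℂ :=
  let li : Fin k := ⟨l - 1, by omega⟩
  θ y * star (θ y')
    * (∏ i ∈ univ.filter (fun i : Fin k => i.val + 1 < l),
        f i (x + P i y • v i - P li y' • v li) * star (f i (x + P i y' • v i - P li y' • v li)))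
    * f li (x + P li y • v li - P li y' • v li)
    * ∏ i ∈ univ.filter (fun i : Fin k => l ≤ i.val), ep p ((P i y - P i y') * ξ i)

theorem Gop_eq_sum_summand [NeZero p] (x : Fin D → ZMod p) :
    Gop p D k l θ f v P ξ x = (∑ y, Gop.summand l θ f v P ξ y x) / p :=
  rfl

theorem Fdual_eq_sum_summand [NeZero p] (x : Fin D → ZMod p) :
    Fdual p D k l hl hlk θ f v P ξ x
      = (∑ y, ∑ y', Fdual.summand l hl hlk θ f v P ξ y y' x) / ((p : ℂ) * p) :=
  rfl

theorem filter_lt_eq_insert_filter_succ_lt :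
    univ.filter (fun i : Fin k => i.val < l)
      = insert ⟨l - 1, by omega⟩ (univ.filter (fun i : Fin k => i.val + 1 < l)) := by
  ext i
  simp only [mem_filter, mem_univ, true_and, mem_insert, Fin.ext_iff]
  omega

theorem Gop.summand_mul_star [NeZero p] (y y' : ZMod p) (x : Fin D → ZMod p) :
    Gop.summand l θ f v P ξ y x * star (Gop.summand l θ f v P ξ y' x)
      = Fdual.summand l hl hlk θ f v P ξ y y' (x + P ⟨l - 1, by omega⟩ y' • v ⟨l - 1, by omega⟩)
        * star (f ⟨l - 1, by omega⟩ (x + P ⟨l - 1, by omega⟩ y' • v ⟨l - 1, by omega⟩)) := by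
  have hcancel : ∀ c w : Fin D → ZMod p, x + c + w - c = x + w := fun c w => by abel
  have hli : (⟨l - 1, by omega⟩ : Fin k) ∉ univ.filter (fun i : Fin k => i.val + 1 < l) := by
    simp only [mem_filter, mem_univ, true_and]
    omega
  simp only [Gop.summand, Fdual.summand, hcancel, sub_mul, ep_sub, star_mul', star_prod,
    prod_mul_distrib, filter_lt_eq_insert_filter_succ_lt l hl hlk, prod_insert hli]
  ring

theorem sum_Gop_summand_mul_star [NeZero p] (y y' : ZMod p) :
    ∑ x, Gop.summand l θ f v P ξ y x * star (Gop.summand l θ f v P ξ y' x)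
      = ∑ x, Fdual.summand l hl hlk θ f v P ξ y y' x * star (f ⟨l - 1, by omega⟩ x) := by
  simp_rw [Gop.summand_mul_star l hl hlk]
  exact Equiv.sum_comp (Equiv.addRight _)
    (fun x => Fdual.summand l hl hlk θ f v P ξ y y' x * star (f ⟨l - 1, by omega⟩ x))

theorem sum_Gop_mul_star_eq_sum_Fdual_mul_star [NeZero p] :
    ∑ x, Gop p D k l θ f v P ξ x * star (Gop p D k l θ f v P ξ x)
      = ∑ x, Fdual p D k l hl hlk θ f v P ξ x * star (f ⟨l - 1, by omega⟩ x) := by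
  have hG : ∀ x, Gop p D k l θ f v P ξ x * star (Gop p D k l θ f v P ξ x)
      = (∑ yy : ZMod p × ZMod p,
          Gop.summand l θ f v P ξ yy.1 x * star (Gop.summand l θ f v P ξ yy.2 x))
        / ((p : ℂ) * p) := by
    intro x
    rw [Gop_eq_sum_summand, star_div₀, star_natCast, star_sum, div_mul_div_comm, sum_mul_sum,
      Fintype.sum_prod_type]
  have hF : ∀ x, Fdual p D k l hl hlk θ f v P ξ x * star (f ⟨l - 1, by omega⟩ x)
      = (∑ yy : ZMod p × ZMod p,
          Fdual.summand l hl hlk θ f v P ξ yy.1 yy.2 x * star (f ⟨l - 1, by omega⟩ x))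
        / ((p : ℂ) * p) := by
    intro x
    rw [Fdual_eq_sum_summand, div_mul_eq_mul_div, Fintype.sum_prod_type, sum_mul]
    simp_rw [sum_mul]
  simp only [hG, hF, ← sum_div]
  exact congrArg (· / _) <| sum_comm.trans <|
    (sum_congr rfl fun yy _ => sum_Gop_summand_mul_star l hl hlk θ f v P ξ yy.1 yy.2).trans sum_comm

end DualIdentity

/-- Cauchy–Schwarz step: the square of the `L²`-mass of the weighted averaging operator
is bounded by the `L²`-mass of the dual function. -/
theorem l2_sq_le_dual_l2 (p : ℕ) [Fact p.Prime] (D k l : ℕ)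
    (hl : 1 ≤ l) (hlk : l ≤ k)
    (θ : ZMod p → ℂ) (f : Fin k → (Fin D → ZMod p) → ℂ)
    (hfl : ∀ x, ‖f ⟨l - 1, by omega⟩ x‖ ≤ 1)
    (v : Fin k → Fin D → ZMod p)
    (Ppoly : Fin k → Polynomial (ZMod p)) (ξ : Fin k → ZMod p) :
    ((∑ x : Fin D → ZMod p,
        (‖Gop p D k l θ f v (fun i y => (Ppoly i).eval y) ξ x‖)^2) / (p : ℝ)^D)^2
      ≤ (∑ x : Fin D → ZMod p,
          (‖Fdual p D k l hl hlk θ f v (fun i y => (Ppoly i).eval y) ξ x‖)^2)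
          / (p : ℝ)^D := by
  have hcard : (Fintype.card (Fin D → ZMod p) : ℝ) = (p : ℝ) ^ D := by
    rw [Fintype.card_fun, ZMod.card, Fintype.card_fin, Nat.cast_pow]
  rw [← hcard]
  exact sq_sum_norm_sq_div_card_le_of_sum_mul_star_eq hfl
    (sum_Gop_mul_star_eq_sum_Fdual_mul_star l hl hlk θ f v _ ξ)
end

section
/- (Degree-lowering inequality for the dual function.) With F, G_{l−1} defined as below, for every ξ_l ∈ 𝔽_p one has 𝔼_{x ∈ 𝔽_p^D} |F̂(x; v_l; ξ_l)|² ≤ 𝔼_{x ∈ 𝔽_p^D} |G_{l−1}(x)|², where F̂(x; v_l; ξ_l) := 𝔼_{n ∈ 𝔽_p} F(x + n v_l) e_p(−n ξ_l), F is the dual function F(x) := 𝔼_{y,y' ∈ 𝔽_p} θ(y) conj(θ(y')) [∏_{i=1}^{l−1} f_i(x + P_i(y)v_i − P_l(y')v_l) conj(f_i)(x + P_i(y')v_i − P_l(y')v_l)] f_l(x + P_l(y)v_l − P_l(y')v_l) ∏_{i=l+1}^k e_p((P_i(y)−P_i(y'))ξ_i), and G_{l−1}(x) := 𝔼_{y'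 ∈ 𝔽_p} conj(θ)(y') ∏_{i=1}^{l−1} conj(f_i)(x + P_i(y') v_i) ∏_{i=l}^k e_p(−P_i(y') ξ_i). -/
/-!
Substituting `n ↦ n + P_l(y')` in `F̂(x) = 𝔼_n F(x + n v_l) e_p(-n ξ_l)` decouples the two
variables `y`, `y'` of the dual function:
`F̂(x) = 𝔼_n G_l(x + n v_l) e_p(-n ξ_l) G_{l-1}(x + n v_l)`, where `G_l = Gop` is `1`-bounded.
Hence `|F̂(x)| ≤ 𝔼_n |G_{l-1}(x + n v_l)|`, and Cauchy–Schwarz followed by the change of variables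
`x ↦ x - n v_l` gives the bound.
-/

open Finset

lemma ep_eq_toCircle (p : ℕ) [NeZero p] (x : ZMod p) : ep p x = ZMod.toCircle x := by
  rw [ZMod.toCircle_apply, ep]

lemma ep_add (p : ℕ) [NeZero p] (a b : ZMod p) : ep p (a + b) = ep p a * ep p b := by
  simp only [ep_eq_toCircle, AddChar.map_add_eq_mul, Circle.coe_mul]

lemma norm_ep (p : ℕ) [NeZero p] (x : ZMod p) : ‖ep p x‖ = 1 := by
  rw [ep_eq_toCircle, Circle.norm_coe]

theorem sum_sum_sum_eq_of_translate_eq_mul {G ι κ R : Type*} [AddGroup G] [Fintype G]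
    [Fintype ι] [Fintype κ] [CommSemiring R] (T : G → ι → κ → R) (A : G → ι → R)
    (B : G → κ → R) (σ : κ → G) (h : ∀ n y y', T (n + σ y') y y' = A n y * B n y') :
    ∑ n, ∑ y, ∑ y', T n y y' = ∑ n, ∑ y, ∑ y', A n y * B n y' := by
  calc ∑ n, ∑ y, ∑ y', T n y y'
      = ∑ y', ∑ n, ∑ y, T n y y' :=
        (sum_congr rfl fun _ _ => sum_comm).trans sum_comm
    _ = ∑ y', ∑ n, ∑ y, T (n + σ y') y y' := sum_congr rfl fun y' _ =>
        (Fintype.sum_equiv (Equiv.addRight (σ y')) (fun n => ∑ y, T (n + σ y') y y')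
          (fun n => ∑ y, T n y y') fun _ => rfl).symm
    _ = ∑ n, ∑ y, ∑ y', A n y * B n y' := by
        simp only [h]
        exact sum_comm.trans (sum_congr rfl fun _ _ => sum_comm)

theorem sum_sq_average_translate_le {ι X : Type*} [Fintype ι] [AddGroup X] [Fintype X]
    (s : ι → X) (H : X → ℝ) :
    ∑ x, ((∑ i, H (x + s i)) / Fintype.card ι) ^ 2 ≤ ∑ x, H x ^ 2 := by
  rcases isEmpty_or_nonempty ι with hι | hι
  · simpa using sum_nonneg fun x _ => sq_nonneg (H x)
  set c : ℝ := (Fintype.card ι : ℝ)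
  have hc : 0 < c := by positivity
  have hpoint : ∀ x, ((∑ i, H (x + s i)) / c) ^ 2 ≤ (∑ i, H (x + s i) ^ 2) / c := by
    intro x
    rw [div_pow, div_le_div_iff₀ (by positivity) hc]
    calc (∑ i, H (x + s i)) ^ 2 * c ≤ (c * ∑ i, H (x + s i) ^ 2) * c :=
          mul_le_mul_of_nonneg_right (sq_sum_le_card_mul_sum_sq ..) hc.le
      _ = (∑ i, H (x + s i) ^ 2) * c ^ 2 := by ring
  calc ∑ x, ((∑ i, H (x + s i)) / c) ^ 2 ≤ ∑ x, (∑ i, H (x + s i) ^ 2) / c :=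
        sum_le_sum fun x _ => hpoint x
    _ = (∑ i, ∑ x, H (x + s i) ^ 2) / c := by rw [← sum_div, sum_comm]
    _ = ∑ x, H x ^ 2 := by
        simp only [fun i => Fintype.sum_equiv (Equiv.addRight (s i)) (fun x => H (x + s i) ^ 2)
          (fun x => H x ^ 2) fun _ => rfl, sum_const, card_univ, nsmul_eq_mul]
        exact mul_div_cancel_left₀ _ hc.ne'

section

variable {p D k : ℕ} [NeZero p] (l : ℕ) (θ : ZMod p → ℂ) (f : Fin k → (Fin D → ZMod p) → ℂ)
  (v : Fin k → Fin D → ZMod p) (P : Fin k → ZMod p → ZMod p) (ξ : Fin k → ZMod p)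

/-- The function `G_{l-1}` of the paper. -/
noncomputable def Gconj (x : Fin D → ZMod p) : ℂ :=
  (∑ y' : ZMod p, star (θ y')
      * (∏ i ∈ univ.filter (fun i : Fin k => i.val + 1 < l), star (f i (x + P i y' • v i)))
      * ∏ i ∈ univ.filter (fun i : Fin k => l ≤ i.val + 1), ep p (-(P i y' * ξ i))) / p

theorem norm_Gop_le_one {θ f} (hθ : ∀ y, ‖θ y‖ ≤ 1) (hf : ∀ i x, ‖f i x‖ ≤ 1)
    (x : Fin D → ZMod p) : ‖Gop p D k l θ f v P ξ x‖ ≤ 1 := by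
  have hterm : ∀ y, ‖θ y * (∏ i ∈ univ.filter (fun i : Fin k => i.val < l),
      f i (x + P i y • v i)) * ∏ i ∈ univ.filter (fun i : Fin k => l ≤ i.val),
      ep p (P i y * ξ i)‖ ≤ 1 := by
    intro y
    simp only [norm_mul, norm_prod, norm_ep, prod_const_one, mul_one]
    exact mul_le_one₀ (hθ y) (by positivity)
      (prod_le_one (fun _ _ => norm_nonneg _) fun i _ => hf i _)
  have hp : (0 : ℝ) < p := by exact_mod_cast Nat.pos_of_neZero p
  rw [Gop, norm_div, Complex.norm_natCast, div_le_one hp]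
  calc _ ≤ ∑ y : ZMod p, (1 : ℝ) := (norm_sum_le _ _).trans (sum_le_sum fun y _ => hterm y)
    _ = p := by simp

theorem sum_Fdual_translate_mul_ep (hl : 1 ≤ l) (hlk : l ≤ k) (x : Fin D → ZMod p) :
    ∑ n : ZMod p, Fdual p D k l hl hlk θ f v P ξ (x + n • v ⟨l - 1, by omega⟩)
        * ep p (-(n * ξ ⟨l - 1, by omega⟩))
      = ∑ n : ZMod p, Gop p D k l θ f v P ξ (x + n • v ⟨l - 1, by omega⟩)
        * ep p (-(n * ξ ⟨l - 1, by omega⟩))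
        * Gconj l θ f v P ξ (x + n • v ⟨l - 1, by omega⟩) := by
  set li : Fin k := ⟨l - 1, by omega⟩
  have hlt : univ.filter (fun i : Fin k => i.val < l)
      = insert li (univ.filter (fun i : Fin k => i.val + 1 < l)) := by
    ext i; simp only [mem_filter, mem_univ, true_and, mem_insert, Fin.ext_iff]
    change _ ↔ _ = l - 1 ∨ _; omega
  have hle : univ.filter (fun i : Fin k => l ≤ i.val + 1)
      = insert li (univ.filter (fun i : Fin k => l ≤ i.val)) := by
    ext i; simp only [mem_filter, mem_univ, true_and, mem_insert, Fin.ext_iff]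
    change _ ↔ _ = l - 1 ∨ _; omega
  have hli_lt : li ∉ univ.filter (fun i : Fin k => i.val + 1 < l) := by
    simp only [mem_filter, mem_univ, true_and]; change ¬(l - 1 + 1 < l); omega
  have hli_le : li ∉ univ.filter (fun i : Fin k => l ≤ i.val) := by
    simp only [mem_filter, mem_univ, true_and]; change ¬(l ≤ l - 1); omega
  simp only [Fdual, Gop, Gconj, div_mul_eq_mul_div, mul_div_assoc', div_div, ← sum_div, sum_mul]
  simp only [mul_sum]
  congr 1
  refine sum_sum_sum_eq_of_translate_eq_mul _ _ _ (fun y' => P li y') ?_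
  intro n y y'
  have hshift : ∀ w, x + (n + P li y') • v li + w - P li y' • v li = x + n • v li + w := by
    intro w; rw [add_smul]; abel
  have hep : ∀ i,
      ep p ((P i y - P i y') * ξ i) = ep p (P i y * ξ i) * ep p (-(P i y' * ξ i)) := by
    intro i; rw [← ep_add]; ring_nf
  have hepn : ep p (-((n + P li y') * ξ li)) = ep p (-(n * ξ li)) * ep p (-(P li y' * ξ li)) := by
    rw [← ep_add]; ring_nf
  -- `Fdual` unfolds to its own copy of `⟨l - 1, _⟩`, which `set` did not abbreviate.
  have hli : (⟨l - 1, by omega⟩ : Fin k) = li := rfl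
  simp only [hli, hshift, hep, hepn, prod_mul_distrib, hlt, hle, prod_insert hli_lt,
    prod_insert hli_le]
  ring

end

/-- Degree-lowering inequality: the Fourier mass of the dual function at any single
frequency `ξ_l` along `v_l` is controlled by the `L²`-mass of the shorter weighted
averaging operator `G_{l-1}`. -/
theorem degree_lowering (p : ℕ) [Fact p.Prime] (D k l : ℕ)
    (hl : 2 ≤ l) (hlk : l ≤ k)
    (θ : ZMod p → ℂ) (hθ : ∀ y, ‖θ y‖ ≤ 1)
    (f : Fin k → (Fin D → ZMod p) → ℂ) (hf : ∀ i x, ‖f i x‖ ≤ 1)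
    (v : Fin k → Fin D → ZMod p)
    (P : Fin k → ZMod p → ZMod p) (ξ : Fin k → ZMod p) :
    (∑ x : Fin D → ZMod p,
        ‖(∑ n : ZMod p,
            Fdual p D k l (by omega) hlk θ f v P ξ (x + n • v ⟨l - 1, by omega⟩)
              * ep p (-(n * ξ ⟨l - 1, by omega⟩))) / p‖^2) / (p : ℝ)^D
      ≤ (∑ x : Fin D → ZMod p,
          ‖(∑ y' : ZMod p, star (θ y')
              * (∏ i ∈ Finset.univ.filter (fun i : Fin k => i.val + 1 < l),
                  star (f i (x + P i y' • v i)))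
              * ∏ i ∈ Finset.univ.filter (fun i : Fin k => l ≤ i.val + 1),
                  ep p (-(P i y' * ξ i))) / p‖^2) / (p : ℝ)^D := by
  set li : Fin k := ⟨l - 1, by omega⟩
  have hpoint : ∀ x, ‖(∑ n : ZMod p, Fdual p D k l (by omega) hlk θ f v P ξ (x + n • v li)
        * ep p (-(n * ξ li))) / p‖
      ≤ (∑ n : ZMod p, ‖Gconj l θ f v P ξ (x + n • v li)‖) / Fintype.card (ZMod p) := by
    intro x
    rw [sum_Fdual_translate_mul_ep, norm_div, Complex.norm_natCast, ZMod.card]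
    gcongr
    refine (norm_sum_le _ _).trans (sum_le_sum fun n _ => ?_)
    rw [norm_mul, norm_mul, norm_ep, mul_one]
    exact mul_le_of_le_one_left (norm_nonneg _) (norm_Gop_le_one l v P ξ hθ hf _)
  gcongr ?_ / _
  calc _ ≤ ∑ x, ((∑ n : ZMod p, ‖Gconj l θ f v P ξ (x + n • v li)‖)
          / Fintype.card (ZMod p)) ^ 2 := by
        gcongr with x; exact hpoint x
    _ ≤ ∑ x, ‖Gconj l θ f v P ξ x‖ ^ 2 :=
        sum_sq_average_translate_le (fun n => n • v li) fun x => ‖Gconj l θ f v P ξ x‖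
end

section
/- (Diagonal Cauchy–Schwarz / box-norm completion step.) Let F : 𝔽_p^D → ℂ be 1-bounded, v ∈ 𝔽_p^D nonzero with 𝔽_p^D = ⟨v⟩^⊥ ⊕ ⟨v⟩, and let F'' : 𝔽_p^D → ℂ be 1-bounded. Then |𝔼_{h ∈ 𝔽_p^D} 𝔼_{x' ∈ ⟨v⟩^⊥} (𝔼_{m ∈ 𝔽_p} F''(x' + m v)) (𝔼_{n ∈ 𝔽_p} ΔₕF̄(x' + n v))|² ≤ 𝔼_{h, x ∈ 𝔽_p^D} 𝔼_{n ∈ 𝔽_p} Δ_{h, n v} F(x), where Δ_h F(x) := F(x) conj(F(x+h)) and Δ_{h, nv} F(x) := Δ_h F(x) · conj(Δ_h F(x + n v)); in particular the right-hand side equals ‖F‖⁴_{𝔽_p^D, ⟨v⟩}, the fourth power of the Gowers box norm along (𝔽_p^D, ⟨v⟩). -/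
open Finset
open scoped ComplexOrder

def dotLin (p D : ℕ) (v : Fin D → ZMod p) : (Fin D → ZMod p) →ₗ[ZMod p] ZMod p where
  toFun w := ∑ i, w i * v i
  map_add' a b := by simp [add_mul, Finset.sum_add_distrib]
  map_smul' c a := by simp [Finset.mul_sum, mul_assoc]

/-!
Write `x = w + c • v` with `w` in the complement `W` of `⟨v⟩`. Bounding the averages of `F''`
by `1` and applying Cauchy–Schwarz in `(h, w)` bounds the left side by the energy
`∑ h, ∑ w, |∑ c, conj (F (w + c v)) F (w + c v + h)|²` of the fibre sums of the multiplicative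
derivatives. Expanding each square and reindexing the second fibre variable by `c + k` turns
this energy into the box-norm sum `∑ h, ∑ k, ∑ x, Δ_h F x · conj (Δ_h F (x + k v))`; the
normalisations match because `|W| · p = p ^ D`.
-/

section Averaging

variable {ι : Type*}

theorem norm_sum_div_card_le_one {s : Finset ι} {f : ι → ℂ} (hf : ∀ i ∈ s, ‖f i‖ ≤ 1) :
    ‖(∑ i ∈ s, f i) / #s‖ ≤ 1 := by
  rw [norm_div, Complex.norm_natCast]
  refine div_le_one_of_le₀ ?_ (Nat.cast_nonneg _)
  calc ‖∑ i ∈ s, f i‖ ≤ ∑ i ∈ s, ‖f i‖ := norm_sum_le _ _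
    _ ≤ ∑ _i ∈ s, (1 : ℝ) := sum_le_sum hf
    _ = #s := by simp

theorem norm_sum_mul_sq_le_card_mul_sum_sq {s : Finset ι} {a b : ι → ℂ}
    (ha : ∀ i ∈ s, ‖a i‖ ≤ 1) :
    ‖∑ i ∈ s, a i * b i‖ ^ 2 ≤ #s * ∑ i ∈ s, ‖b i‖ ^ 2 := by
  have htriangle : ‖∑ i ∈ s, a i * b i‖ ≤ ∑ i ∈ s, ‖b i‖ :=
    (norm_sum_le _ _).trans <| sum_le_sum fun i hi => by
      rw [norm_mul]; exact mul_le_of_le_one_left (norm_nonneg _) (ha i hi)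
  exact (pow_le_pow_left₀ (norm_nonneg _) htriangle 2).trans sq_sum_le_card_mul_sum_sq

end Averaging

section Fibres

variable {K M : Type*} [Field K] [Fintype K] [AddCommGroup M] [Module K M] [Fintype M]
  {W : Submodule K M} [Fintype W] {v : M}

theorem Submodule.sum_sum_add_smul_eq_sum {β : Type*} [AddCommMonoid β]
    (hW : IsCompl W (K ∙ v)) (hv : v ≠ 0) (g : M → β) :
    ∑ w : W, ∑ c : K, g (w + c • v) = ∑ x, g x := by
  let e : (W × K) ≃ₗ[K] M := ((LinearEquiv.refl K W).prodCongr
    (LinearEquiv.toSpanNonzeroSingleton K M v hv)).trans (W.prodEquivOfIsCompl _ hW)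
  rw [← Fintype.sum_prod_type', ← e.toEquiv.sum_comp g]
  rfl

theorem Submodule.card_mul_card_eq_card_of_isCompl_span (hW : IsCompl W (K ∙ v)) (hv : v ≠ 0) :
    Fintype.card W * Fintype.card K = Fintype.card M := by
  simpa [mul_comm] using W.sum_sum_add_smul_eq_sum hW hv fun _ => (1 : ℕ)

theorem Submodule.sum_norm_sq_sum_add_smul (hW : IsCompl W (K ∙ v)) (hv : v ≠ 0) (f : M → ℂ) :
    ∑ w : W, (‖∑ c : K, f (w + c • v)‖ : ℂ) ^ 2 = ∑ k : K, ∑ x, f x * star (f (x + k • v)) := by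
  have hfibre (w : M) : (‖∑ c : K, f (w + c • v)‖ : ℂ) ^ 2
      = ∑ k : K, ∑ c : K, f (w + c • v) * star (f (w + c • v + k • v)) := by
    rw [← Complex.mul_conj', map_sum, sum_mul_sum]
    conv_rhs => rw [sum_comm]
    refine sum_congr rfl fun c _ => ?_
    rw [← Equiv.sum_comp (Equiv.addLeft c)]
    simp only [Equiv.coe_addLeft, add_smul, add_assoc, Complex.star_def]
  simp_rw [hfibre]
  rw [sum_comm]
  exact sum_congr rfl fun k _ => W.sum_sum_add_smul_eq_sum hW hv fun x => f x * star (f (x + k • v))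

theorem Submodule.sum_box_eq_sum_norm_sq (hW : IsCompl W (K ∙ v)) (hv : v ≠ 0) (F : M → ℂ) :
    ∑ h, ∑ x, ∑ c : K, F x * star (F (x + h)) * star (F (x + c • v)) * F (x + h + c • v)
      = ((∑ h, ∑ w : W, ‖∑ c : K, star (F (w + c • v)) * F (w + c • v + h)‖ ^ 2 : ℝ) : ℂ) := by
  push_cast
  refine sum_congr rfl fun h _ => ?_
  have hconj (y : M) : star (F y) * F (y + h) = star (F y * star (F (y + h))) := by
    rw [star_mul, star_star, mul_comm]
  simp_rw [hconj, ← star_sum, norm_star]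
  rw [W.sum_norm_sq_sum_add_smul hW hv fun x => F x * star (F (x + h)), sum_comm]
  refine sum_congr rfl fun c _ => sum_congr rfl fun x _ => ?_
  rw [star_mul, star_star, add_right_comm x h]
  ring

theorem Submodule.norm_sq_pairing_le (hW : IsCompl W (K ∙ v)) (hv : v ≠ 0) {F'' : M → ℂ}
    (hF'' : ∀ x, ‖F'' x‖ ≤ 1) (F : M → ℂ) :
    ‖(∑ h : M, (∑ w : W, ((∑ c : K, F'' (w + c • v)) / Fintype.card K)
          * ((∑ c : K, star (F (w + c • v)) * F (w + c • v + h)) / Fintype.card K))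
        / Fintype.card W) / Fintype.card M‖ ^ 2
      ≤ (∑ h, ∑ w : W, ‖∑ c : K, star (F (w + c • v)) * F (w + c • v + h)‖ ^ 2)
        / (Fintype.card M * Fintype.card M * Fintype.card K) := by
  set q := Fintype.card K
  have hcard : (Fintype.card W * q : ℝ) = Fintype.card M := by
    exact_mod_cast W.card_mul_card_eq_card_of_isCompl_span hW hv
  have havg (w : W) : ‖(∑ c : K, F'' (w + c • v)) / q‖ ≤ 1 :=
    norm_sum_div_card_le_one fun c _ => hF'' _
  have hCS := norm_sum_mul_sq_le_card_mul_sum_sq (s := (univ : Finset (M × W)))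
    (a := fun z => (∑ c : K, F'' (z.2 + c • v)) / q)
    (b := fun z => (∑ c : K, star (F (z.2 + c • v)) * F (z.2 + c • v + z.1)) / q)
    fun z _ => havg z.2
  simp only [Fintype.sum_prod_type, card_univ, Fintype.card_prod, norm_div, div_pow,
    Complex.norm_natCast, ← sum_div] at hCS
  rw [← sum_div, div_div, norm_div, div_pow, norm_mul, Complex.norm_natCast,
    Complex.norm_natCast]
  calc _ ≤ _ := div_le_div_of_nonneg_right hCS (by positivity)
    _ = _ := by push_cast; rw [← hcard]; field_simp

end Fibres

theorem box_norm_completion_general (p : ℕ) [Fact p.Prime] (D : ℕ)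
    (F : (Fin D → ZMod p) → ℂ)
    (F'' : (Fin D → ZMod p) → ℂ) (hF'' : ∀ x, norm (F'' x) ≤ 1)
    (v : Fin D → ZMod p) (hv : v ≠ 0)
    (hcompl : IsCompl (LinearMap.ker (dotLin p D v)) (Submodule.span (ZMod p) {v})) :
    (((norm ((∑ h : Fin D → ZMod p,
        (∑ x' : {w : Fin D → ZMod p // ∑ i, w i * v i = 0},
            ((∑ m : ZMod p, F'' (x'.val + m • v)) / p)
              * ((∑ n : ZMod p, star (F (x'.val + n • v)) * F (x'.val + n • v + h)) / p))
          / (Fintype.card {w : Fin D → ZMod p // ∑ i, w i * v i = 0})) / (p : ℂ)^D))^2 : ℝ) : ℂ)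
      ≤ (∑ h : Fin D → ZMod p, ∑ x : Fin D → ZMod p, ∑ n : ZMod p,
          F x * star (F (x + h)) * star (F (x + n • v)) * F (x + h + n • v))
          / ((p : ℂ)^D * (p : ℂ)^D * p) := by
  -- `{w // ∑ i, w i * v i = 0}` is `LinearMap.ker (dotLin p D v)` with membership unfolded
  let _ : Fintype (LinearMap.ker (dotLin p D v)) :=
    inferInstanceAs (Fintype {w : Fin D → ZMod p // ∑ i, w i * v i = 0})
  have hpairing := (LinearMap.ker (dotLin p D v)).norm_sq_pairing_le hcompl hv hF'' F
  simp only [ZMod.card, Fintype.card_pi, Fintype.card_fin, prod_const, card_univ] at hpairing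
  rw [(LinearMap.ker (dotLin p D v)).sum_box_eq_sum_norm_sq hcompl hv F]
  exact_mod_cast hpairing

/-- Diagonal Cauchy–Schwarz / box-norm completion step: the square of the pairing of the
`v`-direction averages of a 1-bounded `F''` against the `v`-direction averages of the
multiplicative derivatives of `conj F` is bounded by the fourth power of the Gowers box
norm of `F` along `(𝔽_p^D, ⟨v⟩)`. -/
theorem box_norm_completion (p : ℕ) [Fact p.Prime] (D : ℕ) (hD : 1 ≤ D)
    (F : (Fin D → ZMod p) → ℂ) (hF : ∀ x, norm (F x) ≤ 1)
    (F'' : (Fin D → ZMod p) → ℂ) (hF'' : ∀ x, norm (F'' x) ≤ 1)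
    (v : Fin D → ZMod p) (hv : v ≠ 0)
    (hcompl : IsCompl (LinearMap.ker (dotLin p D v)) (Submodule.span (ZMod p) {v})) :
    (((norm ((∑ h : Fin D → ZMod p,
        (∑ x' : {w : Fin D → ZMod p // ∑ i, w i * v i = 0},
            ((∑ m : ZMod p, F'' (x'.val + m • v)) / p)
              * ((∑ n : ZMod p, star (F (x'.val + n • v)) * F (x'.val + n • v + h)) / p))
          / (Fintype.card {w : Fin D → ZMod p // ∑ i, w i * v i = 0})) / (p : ℂ)^D))^2 : ℝ) : ℂ)
      ≤ (∑ h : Fin D → ZMod p, ∑ x : Fin D → ZMod p, ∑ n : ZMod p,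
          F x * star (F (x + h)) * star (F (x + n • v)) * F (x + h + n • v))
          / ((p : ℂ)^D * (p : ℂ)^D * p) :=
  box_norm_completion_general p D F F'' hF'' v hv hcompl
end
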